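/- Under assumptions (A1)–(A6) and positivity, the potential-outcome mean in the target population is identified by the g-formula: E[Y_a | R = false] = Σ_x ℙ(X = x | R = false) · E[Y | X = x, A = a, R = true], where the sum is over all x with ℙ(X = x, R = false) > 0. -/

import Mathlib

open Finset

attribute [local instance] Classical.propDecidable

variable {Ω : Type*}

/-- Probability of an event. -/
noncomputable def pr [Fintype Ω] (P : Ω → ℝ) (E : Ω → Prop) : ℝ :=
  ∑ ω, if E ω then P ω else 0

/-- Expectation of a real random variable. -/
noncomputable def ex [Fintype Ω] (P : Ω → ℝ) (Z : Ω → ℝ) : ℝ :=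
  ∑ ω, P ω * Z ω

/-- Conditional probability ℙ(F | E) = ℙ(F ∩ E)/ℙ(E). -/
noncomputable def cpr [Fintype Ω] (P : Ω → ℝ) (F E : Ω → Prop) : ℝ :=
  pr P (fun ω => F ω ∧ E ω) / pr P E

/-- Conditional expectation E[Z | E] = E[Z·1_E]/ℙ(E). -/
noncomputable def cex [Fintype Ω] (P : Ω → ℝ) (Z : Ω → ℝ) (E : Ω → Prop) : ℝ :=
  (∑ ω, if E ω then P ω * Z ω else 0) / pr P E

/-!
Fix a stratum `X = x, W = w` of the target population. Transportability (A4) says that the law of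
`Y_a` in the stratum is the same in the target and in the trial; within-trial exchangeability (A2)
lets us further restrict to the treated, where `Y_a = Y` by consistency (A1); and (A6) lets us drop
`W` from the conditioning. So `E[Y_a | X = x, W = w, R = false] = E[Y | X = x, A = a, R = true]`
whenever the stratum is non-null, positivity making every conditioning event above non-null. This
value does not depend on `w`, so averaging over `W` and then over `X` in the target (law of total
expectation) gives the g-formula.
-/

section FiniteProbability

variable [Fintype Ω] (P : Ω → ℝ)

lemma pr_congr {E E' : Ω → Prop} (h : ∀ ω, E ω ↔ E' ω) : pr P E = pr P E' :=
  sum_congr rfl fun ω _ => if_congr (h ω) rfl rfl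

lemma pr_nonneg (hP0 : ∀ ω, 0 ≤ P ω) (E : Ω → Prop) : 0 ≤ pr P E :=
  sum_nonneg fun ω _ => by split_ifs <;> simp [hP0 ω]

lemma pr_mono (hP0 : ∀ ω, 0 ≤ P ω) {E E' : Ω → Prop} (h : ∀ ω, E ω → E' ω) :
    pr P E ≤ pr P E' :=
  sum_le_sum fun ω _ => by
    by_cases hE : E ω
    · simp [hE, h ω hE]
    · simp only [hE, if_false]; split_ifs <;> simp [hP0 ω]

lemma pr_pos_of_imp (hP0 : ∀ ω, 0 ≤ P ω) {E E' : Ω → Prop} (h : ∀ ω, E ω → E' ω)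
    (hE : 0 < pr P E) : 0 < pr P E' :=
  hE.trans_le (pr_mono P hP0 h)

lemma eq_zero_of_pr_eq_zero (hP0 : ∀ ω, 0 ≤ P ω) {E : Ω → Prop} (h : pr P E = 0) {ω : Ω}
    (hω : E ω) : P ω = 0 := by
  have := (sum_eq_zero_iff_of_nonneg fun ω _ => by split_ifs <;> simp [hP0 ω]).1 h ω (mem_univ ω)
  simpa [hω] using this

noncomputable def exOn (Z : Ω → ℝ) (E : Ω → Prop) : ℝ :=
  ∑ ω, if E ω then P ω * Z ω else 0

lemma cex_eq_exOn_div (Z : Ω → ℝ) (E : Ω → Prop) : cex P Z E = exOn P Z E / pr P E := rfl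

lemma pr_eq_exOn_one (E : Ω → Prop) : pr P E = exOn P 1 E := by
  simp [pr, exOn]

lemma exOn_eq_sum_exOn_and {α : Type*} [Fintype α] (X : Ω → α) (Z : Ω → ℝ) (E : Ω → Prop) :
    exOn P Z E = ∑ x, exOn P Z (fun ω => X ω = x ∧ E ω) := by
  unfold exOn
  rw [sum_comm]
  refine sum_congr rfl fun ω _ => ?_
  by_cases hE : E ω <;> simp [hE]

lemma pr_eq_sum_pr_and {α : Type*} [Fintype α] (X : Ω → α) (E : Ω → Prop) :
    pr P E = ∑ x, pr P (fun ω => X ω = x ∧ E ω) := by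
  simp only [pr_eq_exOn_one]
  exact exOn_eq_sum_exOn_and P X 1 E

lemma cpr_congr_right (F : Ω → Prop) {E E' : Ω → Prop} (h : ∀ ω, E ω ↔ E' ω) :
    cpr P F E = cpr P F E' := by
  rw [cpr, cpr, pr_congr P h, pr_congr P fun ω => and_congr_right' (h ω)]

lemma cpr_congr_of_imp {F F' E : Ω → Prop} (h : ∀ ω, E ω → (F ω ↔ F' ω)) :
    cpr P F E = cpr P F' E := by
  rw [cpr, cpr, pr_congr P fun ω => and_congr_left (h ω)]

lemma cpr_eq_zero {F E : Ω → Prop} (h : pr P (fun ω => F ω ∧ E ω) = 0) : cpr P F E = 0 := by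
  rw [cpr, h, zero_div]

lemma sum_cpr_eq_one {α : Type*} [Fintype α] (X : Ω → α) {E : Ω → Prop} (hE : pr P E ≠ 0) :
    ∑ x, cpr P (fun ω => X ω = x) E = 1 := by
  simp only [cpr]
  rw [← sum_div, ← pr_eq_sum_pr_and, div_self hE]

lemma cpr_eq_cpr_of_condIndep {F B E E' : Ω → Prop} (hE'iff : ∀ ω, E' ω ↔ B ω ∧ E ω)
    (hE : pr P E ≠ 0) (hE'ne : pr P E' ≠ 0)
    (hind : cpr P (fun ω => F ω ∧ B ω) E = cpr P F E * cpr P B E) :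
    cpr P F E' = cpr P F E := by
  rw [pr_congr P hE'iff] at hE'ne
  rw [cpr_congr_right P F hE'iff]
  unfold cpr at hind ⊢
  rw [div_eq_iff hE] at hind
  rw [pr_congr P fun ω => (and_assoc (a := F ω)).symm, div_eq_div_iff hE'ne hE, hind]
  field_simp

lemma cex_eq_sum_mul_cpr (Z : Ω → ℝ) (E : Ω → Prop) {s : Finset ℝ} (hs : ∀ ω, Z ω ∈ s) :
    cex P Z E = ∑ y ∈ s, y * cpr P (fun ω => Z ω = y) E := by
  simp only [cex, cpr, pr, ← mul_div_assoc, ← sum_div, mul_sum, mul_ite, mul_zero]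
  rw [sum_comm]
  refine congrArg (· / _) (sum_congr rfl fun ω _ => ?_)
  by_cases hE : E ω
  · simp [hE, hs ω, mul_comm]
  · simp [hE]

lemma cex_eq_cex_of_cpr_eq {Z Z' : Ω → ℝ} {E E' : Ω → Prop}
    (h : ∀ y, cpr P (fun ω => Z ω = y) E = cpr P (fun ω => Z' ω = y) E') :
    cex P Z E = cex P Z' E' := by
  let s := univ.image Z ∪ univ.image Z'
  have hZ : ∀ ω, Z ω ∈ s := fun ω => mem_union_left _ (mem_image_of_mem Z (mem_univ ω))
  have hZ' : ∀ ω, Z' ω ∈ s := fun ω => mem_union_right _ (mem_image_of_mem Z' (mem_univ ω))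
  rw [cex_eq_sum_mul_cpr P Z E hZ, cex_eq_sum_mul_cpr P Z' E' hZ']
  simp only [h]

lemma exOn_eq_pr_mul_cex (hP0 : ∀ ω, 0 ≤ P ω) (Z : Ω → ℝ) (E : Ω → Prop) :
    exOn P Z E = pr P E * cex P Z E := by
  by_cases hE : pr P E = 0
  · rw [hE, zero_mul]
    exact sum_eq_zero fun ω _ => by
      split_ifs with hω
      · rw [eq_zero_of_pr_eq_zero P hP0 hE hω, zero_mul]
      · rfl
  · rw [cex_eq_exOn_div, mul_div_cancel₀ _ hE]

lemma cex_eq_sum_cpr_mul_cex (hP0 : ∀ ω, 0 ≤ P ω) {α : Type*} [Fintype α] (X : Ω → α)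
    (Z : Ω → ℝ) (E : Ω → Prop) :
    cex P Z E = ∑ x, cpr P (fun ω => X ω = x) E * cex P Z (fun ω => X ω = x ∧ E ω) := by
  rw [cex_eq_exOn_div, exOn_eq_sum_exOn_and P X, sum_div]
  refine sum_congr rfl fun x _ => ?_
  rw [exOn_eq_pr_mul_cex P hP0, cpr, div_mul_eq_mul_div]

lemma cex_eq_of_forall_cex_and_eq (hP0 : ∀ ω, 0 ≤ P ω) {α : Type*} [Fintype α] (X : Ω → α)
    (Z : Ω → ℝ) {E : Ω → Prop} (hE : pr P E ≠ 0) {c : ℝ}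
    (h : ∀ x, 0 < pr P (fun ω => X ω = x ∧ E ω) → cex P Z (fun ω => X ω = x ∧ E ω) = c) :
    cex P Z E = c := by
  rw [cex_eq_sum_cpr_mul_cex P hP0 X]
  calc ∑ x, cpr P (fun ω => X ω = x) E * cex P Z (fun ω => X ω = x ∧ E ω)
      = ∑ x, cpr P (fun ω => X ω = x) E * c := by
        refine sum_congr rfl fun x _ => ?_
        rcases (pr_nonneg P hP0 (fun ω => X ω = x ∧ E ω)).lt_or_eq with hx | hx
        · rw [h x hx]
        · rw [cpr_eq_zero P hx.symm, zero_mul, zero_mul]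
    _ = c := by rw [← sum_mul, sum_cpr_eq_one P X hE, one_mul]

end FiniteProbability

section Identification

variable [Fintype Ω] {𝒳 𝒲 𝒯 : Type*} (P : Ω → ℝ) (X : Ω → 𝒳) (W : Ω → 𝒲) (A : Ω → 𝒯)
  (Y Ya : Ω → ℝ) (R : Ω → Bool) (a : 𝒯)

def WithinTrialExchangeable : Prop :=
  ∀ x w a' y, 0 < pr P (fun ω => X ω = x ∧ W ω = w ∧ R ω = true) →
    cpr P (fun ω => Ya ω = y ∧ A ω = a') (fun ω => X ω = x ∧ W ω = w ∧ R ω = true)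
      = cpr P (fun ω => Ya ω = y) (fun ω => X ω = x ∧ W ω = w ∧ R ω = true)
        * cpr P (fun ω => A ω = a') (fun ω => X ω = x ∧ W ω = w ∧ R ω = true)

def Transportable : Prop :=
  ∀ x w r y, 0 < pr P (fun ω => X ω = x ∧ W ω = w) →
    cpr P (fun ω => Ya ω = y ∧ R ω = r) (fun ω => X ω = x ∧ W ω = w)
      = cpr P (fun ω => Ya ω = y) (fun ω => X ω = x ∧ W ω = w)
        * cpr P (fun ω => R ω = r) (fun ω => X ω = x ∧ W ω = w)

def OutcomeIndepMissingCovariates : Prop :=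
  ∀ x, 0 < pr P (fun ω => X ω = x ∧ R ω = true ∧ A ω = a) →
    ∀ w y, 0 < pr P (fun ω => X ω = x ∧ W ω = w ∧ R ω = true ∧ A ω = a) →
    cpr P (fun ω => Y ω = y) (fun ω => X ω = x ∧ W ω = w ∧ R ω = true ∧ A ω = a)
      = cpr P (fun ω => Y ω = y) (fun ω => X ω = x ∧ R ω = true ∧ A ω = a)

variable {P X W A Y Ya R a}

lemma cex_target_stratum_eq_cex_trial (hP0 : ∀ ω, 0 ≤ P ω)
    (hA1 : ∀ ω, A ω = a → Y ω = Ya ω) (hA2 : WithinTrialExchangeable P X W A Ya R)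
    (hA4 : Transportable P X W Ya R) (hA6 : OutcomeIndepMissingCovariates P X W A Y R a)
    (hpos : ∀ x w, 0 < pr P (fun ω => X ω = x ∧ W ω = w ∧ R ω = false) →
      0 < pr P (fun ω => A ω = a ∧ X ω = x ∧ W ω = w ∧ R ω = true))
    {x : 𝒳} {w : 𝒲} (htarget : 0 < pr P (fun ω => W ω = w ∧ X ω = x ∧ R ω = false)) :
    cex P Ya (fun ω => W ω = w ∧ X ω = x ∧ R ω = false)
      = cex P Y (fun ω => X ω = x ∧ A ω = a ∧ R ω = true) := by
  have htreated : 0 < pr P (fun ω => X ω = x ∧ W ω = w ∧ R ω = true ∧ A ω = a) :=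
    pr_pos_of_imp P hP0 (fun ω => by tauto) <|
      hpos x w (pr_pos_of_imp P hP0 (fun ω => by tauto) htarget)
  have hstratum : 0 < pr P (fun ω => X ω = x ∧ W ω = w) :=
    pr_pos_of_imp P hP0 (fun ω => by tauto) htarget
  have htrial : 0 < pr P (fun ω => X ω = x ∧ W ω = w ∧ R ω = true) :=
    pr_pos_of_imp P hP0 (fun ω => by tauto) htreated
  have htreatedX : 0 < pr P (fun ω => X ω = x ∧ R ω = true ∧ A ω = a) :=
    pr_pos_of_imp P hP0 (fun ω => by tauto) htreated
  refine cex_eq_cex_of_cpr_eq P fun y => ?_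
  calc cpr P (fun ω => Ya ω = y) (fun ω => W ω = w ∧ X ω = x ∧ R ω = false)
      = cpr P (fun ω => Ya ω = y) (fun ω => X ω = x ∧ W ω = w) :=
        cpr_eq_cpr_of_condIndep P (fun ω => by tauto) hstratum.ne' htarget.ne'
          (hA4 x w false y hstratum)
    _ = cpr P (fun ω => Ya ω = y) (fun ω => X ω = x ∧ W ω = w ∧ R ω = true) :=
        (cpr_eq_cpr_of_condIndep P (fun ω => by tauto) hstratum.ne' htrial.ne'
          (hA4 x w true y hstratum)).symm
    _ = cpr P (fun ω => Ya ω = y) (fun ω => X ω = x ∧ W ω = w ∧ R ω = true ∧ A ω = a) :=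
        (cpr_eq_cpr_of_condIndep P (fun ω => by tauto) htrial.ne' htreated.ne'
          (hA2 x w a y htrial)).symm
    _ = cpr P (fun ω => Y ω = y) (fun ω => X ω = x ∧ W ω = w ∧ R ω = true ∧ A ω = a) :=
        cpr_congr_of_imp P fun ω hω => by rw [hA1 ω hω.2.2.2]
    _ = cpr P (fun ω => Y ω = y) (fun ω => X ω = x ∧ R ω = true ∧ A ω = a) :=
        hA6 x htreatedX w y htreated
    _ = cpr P (fun ω => Y ω = y) (fun ω => X ω = x ∧ A ω = a ∧ R ω = true) :=
        cpr_congr_right P _ fun ω => by tauto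

end Identification

theorem g_formula_identification_general
    {𝒳 𝒲 𝒯 : Type*} [Fintype Ω] [Fintype 𝒳] [Fintype 𝒲]
    (P : Ω → ℝ) (hP0 : ∀ ω, 0 ≤ P ω)
    (X : Ω → 𝒳) (W : Ω → 𝒲) (A : Ω → 𝒯) (Y Ya : Ω → ℝ) (R : Ω → Bool) (a : 𝒯)
    -- (A1) consistency
    (hA1 : ∀ ω, A ω = a → Y ω = Ya ω)
    -- (A2) within-trial exchangeability over treatment
    (hA2 : ∀ x w a' y, 0 < pr P (fun ω => X ω = x ∧ W ω = w ∧ R ω = true) →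
      cpr P (fun ω => Ya ω = y ∧ A ω = a') (fun ω => X ω = x ∧ W ω = w ∧ R ω = true)
        = cpr P (fun ω => Ya ω = y) (fun ω => X ω = x ∧ W ω = w ∧ R ω = true)
          * cpr P (fun ω => A ω = a') (fun ω => X ω = x ∧ W ω = w ∧ R ω = true))
    -- (A4) transportability
    (hA4 : ∀ x w r y, 0 < pr P (fun ω => X ω = x ∧ W ω = w) →
      cpr P (fun ω => Ya ω = y ∧ R ω = r) (fun ω => X ω = x ∧ W ω = w)
        = cpr P (fun ω => Ya ω = y) (fun ω => X ω = x ∧ W ω = w)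
          * cpr P (fun ω => R ω = r) (fun ω => X ω = x ∧ W ω = w))
    -- (A6) outcome independent of the systematically missing covariates
    (hA6 : ∀ x, 0 < pr P (fun ω => X ω = x ∧ R ω = true ∧ A ω = a) →
      ∀ w y, 0 < pr P (fun ω => X ω = x ∧ W ω = w ∧ R ω = true ∧ A ω = a) →
      cpr P (fun ω => Y ω = y) (fun ω => X ω = x ∧ W ω = w ∧ R ω = true ∧ A ω = a)
        = cpr P (fun ω => Y ω = y) (fun ω => X ω = x ∧ R ω = true ∧ A ω = a))
    -- positivity
    (hpos : ∀ x w, 0 < pr P (fun ω => X ω = x ∧ W ω = w ∧ R ω = false) →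
      0 < pr P (fun ω => A ω = a ∧ X ω = x ∧ W ω = w ∧ R ω = true)) :
    cex P Ya (fun ω => R ω = false)
      = ∑ x ∈ Finset.univ.filter
            (fun x => 0 < pr P (fun ω => X ω = x ∧ R ω = false)),
          cpr P (fun ω => X ω = x) (fun ω => R ω = false)
            * cex P Y (fun ω => X ω = x ∧ A ω = a ∧ R ω = true) := by
  rw [cex_eq_sum_cpr_mul_cex P hP0 X]
  refine (sum_subset_zero_on_sdiff (filter_subset _ _) (fun x hx => ?_) fun x hx => ?_).symm
  · have hx0 : pr P (fun ω => X ω = x ∧ R ω = false) = 0 :=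
      ((pr_nonneg P hP0 _).eq_or_lt.resolve_right (by simpa using hx)).symm
    rw [cpr_eq_zero P hx0, zero_mul]
  · rw [cex_eq_of_forall_cex_and_eq P hP0 W Ya (mem_filter.1 hx).2.ne' fun w hw =>
      cex_target_stratum_eq_cex_trial hP0 hA1 hA2 hA4 hA6 hpos hw]

/-- Under (A1)–(A6) and positivity, the potential-outcome mean in the
target population is identified by the g-formula. -/
theorem g_formula_identification
    {𝒳 𝒲 𝒯 : Type*} [Fintype Ω] [Fintype 𝒳] [Fintype 𝒲] [Fintype 𝒯]
    (P : Ω → ℝ) (hP0 : ∀ ω, 0 ≤ P ω) (hP1 : ∑ ω, P ω = 1)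
    (X : Ω → 𝒳) (W : Ω → 𝒲) (A : Ω → 𝒯) (Y Ya : Ω → ℝ) (R : Ω → Bool) (a : 𝒯)
    -- (A1) consistency
    (hA1 : ∀ ω, A ω = a → Y ω = Ya ω)
    -- (A2) within-trial exchangeability over treatment
    (hA2 : ∀ x w a' y, 0 < pr P (fun ω => X ω = x ∧ W ω = w ∧ R ω = true) →
      cpr P (fun ω => Ya ω = y ∧ A ω = a') (fun ω => X ω = x ∧ W ω = w ∧ R ω = true)
        = cpr P (fun ω => Ya ω = y) (fun ω => X ω = x ∧ W ω = w ∧ R ω = true)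
          * cpr P (fun ω => A ω = a') (fun ω => X ω = x ∧ W ω = w ∧ R ω = true))
    -- (A4) transportability
    (hA4 : ∀ x w r y, 0 < pr P (fun ω => X ω = x ∧ W ω = w) →
      cpr P (fun ω => Ya ω = y ∧ R ω = r) (fun ω => X ω = x ∧ W ω = w)
        = cpr P (fun ω => Ya ω = y) (fun ω => X ω = x ∧ W ω = w)
          * cpr P (fun ω => R ω = r) (fun ω => X ω = x ∧ W ω = w))
    -- (A6) outcome independent of the systematically missing covariates
    (hA6 : ∀ x, 0 < pr P (fun ω => X ω = x ∧ R ω = true ∧ A ω = a) →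
      ∀ w y, 0 < pr P (fun ω => X ω = x ∧ W ω = w ∧ R ω = true ∧ A ω = a) →
      cpr P (fun ω => Y ω = y) (fun ω => X ω = x ∧ W ω = w ∧ R ω = true ∧ A ω = a)
        = cpr P (fun ω => Y ω = y) (fun ω => X ω = x ∧ R ω = true ∧ A ω = a))
    -- positivity
    (hposT : 0 < pr P (fun ω => R ω = false))
    (hpos : ∀ x w, 0 < pr P (fun ω => X ω = x ∧ W ω = w ∧ R ω = false) →
      0 < pr P (fun ω => A ω = a ∧ X ω = x ∧ W ω = w ∧ R ω = true)) :
    cex P Ya (fun ω => R ω = false)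
      = ∑ x ∈ Finset.univ.filter
            (fun x => 0 < pr P (fun ω => X ω = x ∧ R ω = false)),
          cpr P (fun ω => X ω = x) (fun ω => R ω = false)
            * cex P Y (fun ω => X ω = x ∧ A ω = a ∧ R ω = true) :=
  g_formula_identification_general P hP0 X W A Y Ya R a hA1 hA2 hA4 hA6 hpos
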